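/- If L is a finite dimensional Lie algebra of dimension n over a field, then dim M(L) ≤ n(n-1)/2 - dim L^2, where L^2 = [L,L]. -/

import Mathlib

open LieModule Finset

/-- Witt's dimension function `l_n(d) = (1/d) ∑_{m ∣ d} μ(m) n^{d/m}`. -/
noncomputable def lWitt (n d : ℕ) : ℚ :=
  (1 / d) * ∑ m ∈ d.divisors, (ArithmeticFunction.moebius m : ℚ) * (n : ℚ) ^ (d / m)

/-- The quotient `A/B` of two Lie ideals, regarded as a module. -/
abbrev lieIdealQuot (K : Type*) {L : Type*} [Field K] [LieRing L] [LieAlgebra K L]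
    (A B : LieIdeal K L) : Type _ :=
  A.toSubmodule ⧸ (B.toSubmodule.comap A.toSubmodule.subtype)

/-- The Schur multiplier `M(L) = (F² ⊓ R)/[F,R]` computed from a free presentation
`L ≅ F/R`, where `R` is the kernel of the presentation. -/
abbrev schurMult (K : Type*) {F : Type*} [Field K] [LieRing F] [LieAlgebra K F]
    (R : LieIdeal K F) : Type _ :=
  lieIdealQuot K (lowerCentralSeries K F F 1 ⊓ R) ⁅(⊤ : LieIdeal K F), R⁆

/-! The bracket `F × F → F²/[F,R]` is alternating, and changing either argument by an element
of `R` changes the bracket by an element of `[F,R]`; so it factors through an alternating map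
`L × L → F²/[F,R]` whose image spans, and `dim F²/[F,R] ≤ dim Λ²L = n(n-1)/2`. On the other hand
`π` maps `F²` onto `L²` with kernel `F² ∩ R`, which gives the exact sequence
`0 → M(L) → F²/[F,R] → L² → 0`. -/

open Module

namespace LinearMap

variable {R M N : Type*} [CommRing R] [AddCommGroup M] [Module R M] [AddCommGroup N] [Module R N]

def toAlternatingMapFinTwo (b : M →ₗ[R] M →ₗ[R] N) (hb : ∀ x, b x x = 0) :
    M [⋀^Fin 2]→ₗ[R] N where
  toFun v := b (v 0) (v 1)
  map_update_add' _ i _ _ := by fin_cases i <;> simp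
  map_update_smul' _ i _ _ := by fin_cases i <;> simp
  map_eq_zero_of_eq' _ i j _ _ := by fin_cases i <;> fin_cases j <;> simp_all

end LinearMap

theorem finite_and_finrank_le_choose_two_of_span_eq_top {K V M : Type*} [Field K]
    [AddCommGroup V] [Module K V] [AddCommGroup M] [Module K M] [FiniteDimensional K V]
    (b : V →ₗ[K] V →ₗ[K] M) (hb : ∀ x, b x x = 0)
    (hspan : Submodule.span K (Set.range fun p : V × V => b p.1 p.2) = ⊤) :
    Module.Finite K M ∧ finrank K M ≤ (finrank K V).choose 2 := by
  set f := exteriorPower.alternatingMapLinearEquiv (b.toAlternatingMapFinTwo hb)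
  have hf : LinearMap.range f = ⊤ := by
    rw [eq_top_iff, ← hspan, Submodule.span_le]
    rintro _ ⟨⟨x, y⟩, rfl⟩
    exact ⟨exteriorPower.ιMulti K 2 ![x, y],
      exteriorPower.alternatingMapLinearEquiv_apply_ιMulti _ _⟩
  refine ⟨Module.Finite.of_surjective f (LinearMap.range_eq_top.mp hf), ?_⟩
  calc finrank K M = finrank K (LinearMap.range f) := by rw [hf, finrank_top]
    _ ≤ finrank K (⋀[K]^2 V) := LinearMap.finrank_range_le f
    _ = (finrank K V).choose 2 := exteriorPower.finrank_eq K 2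

theorem Submodule.finrank_quotient_inf_ker_add_finrank_map {K V W : Type*} [Field K]
    [AddCommGroup V] [Module K V] [AddCommGroup W] [Module K W] (f : V →ₗ[K] W)
    (A B : Submodule K V) (hB : B ≤ LinearMap.ker f)
    [FiniteDimensional K (A ⧸ B.comap A.subtype)] :
    finrank K (↥(A ⊓ LinearMap.ker f) ⧸ B.comap (A ⊓ LinearMap.ker f).subtype) +
        finrank K (A.map f) = finrank K (A ⧸ B.comap A.subtype) := by
  have hBA : B.comap A.subtype ≤ LinearMap.ker (f ∘ₗ A.subtype) := fun _ hx => hB hx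
  have hBC : B.comap (A ⊓ LinearMap.ker f).subtype ≤
      (B.comap A.subtype).comap (inclusion inf_le_left) := fun _ hx => hx
  set φ := (B.comap A.subtype).liftQ (f ∘ₗ A.subtype) hBA with hφ
  set ι := (B.comap (A ⊓ LinearMap.ker f).subtype).mapQ _ _ hBC with hι
  have hι_inj : LinearMap.ker ι = ⊥ := by
    rw [hι, Submodule.ker_mapQ]
    exact Submodule.mkQ_map_self _
  have hker : LinearMap.range ι = LinearMap.ker φ := by
    rw [hι, hφ, Submodule.range_mapQ, Submodule.ker_liftQ, Submodule.range_inclusion,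
      LinearMap.ker_comp]
    congr 1
    ext x
    simp
  have hrange : LinearMap.range φ = A.map f := by
    rw [hφ, Submodule.range_liftQ, LinearMap.range_comp, Submodule.range_subtype]
  rw [← hrange, (LinearEquiv.ofInjective ι (LinearMap.ker_eq_bot.mp hι_inj)).finrank_eq, hker,
    add_comm]
  exact φ.finrank_range_add_finrank_ker

section LieBracketQuot

variable {K F : Type*} [Field K] [LieRing F] [LieAlgebra K F]

lemma lowerCentralSeries_one_eq_span :
    (lowerCentralSeries K F F 1).toSubmodule =
      Submodule.span K (Set.range fun p : F × F => ⁅p.1, p.2⁆) := by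
  rw [lowerCentralSeries_succ, lowerCentralSeries_zero,
    LieSubmodule.lieIdeal_oper_eq_linear_span']
  congr 1
  ext
  simp

lemma lie_mem_lowerCentralSeries_one (x y : F) : ⁅x, y⁆ ∈ lowerCentralSeries K F F 1 := by
  rw [← LieSubmodule.mem_toSubmodule, lowerCentralSeries_one_eq_span]
  exact Submodule.subset_span ⟨(x, y), rfl⟩

lemma lie_sub_lie_mem_lie_top (R : LieIdeal K F) {x x' y y' : F} (hx : x - x' ∈ R)
    (hy : y - y' ∈ R) : ⁅x, y⁆ - ⁅x', y'⁆ ∈ ⁅(⊤ : LieIdeal K F), R⁆ := by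
  have h : ⁅x, y⁆ - ⁅x', y'⁆ = ⁅x, y - y'⁆ - ⁅y', x - x'⁆ := by
    rw [← lie_skew y' (x - x')]
    simp only [lie_sub, sub_lie]
    abel
  rw [h]
  exact sub_mem (LieSubmodule.lie_mem_lie (LieSubmodule.mem_top x) hy)
    (LieSubmodule.lie_mem_lie (LieSubmodule.mem_top y') hx)

variable (K) in
def lieBracketQuot (I : LieIdeal K F) :
    F →ₗ[K] F →ₗ[K] lieIdealQuot K (lowerCentralSeries K F F 1) I :=
  LinearMap.mk₂ K (fun x y => Submodule.Quotient.mk ⟨⁅x, y⁆, lie_mem_lowerCentralSeries_one x y⟩)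
    (fun x x' y => by rw [← Submodule.Quotient.mk_add]; congr 1; ext; exact add_lie x x' y)
    (fun c x y => by rw [← Submodule.Quotient.mk_smul]; congr 1; ext; exact smul_lie c x y)
    (fun x y y' => by rw [← Submodule.Quotient.mk_add]; congr 1; ext; exact lie_add x y y')
    (fun c x y => by rw [← Submodule.Quotient.mk_smul]; congr 1; ext; exact lie_smul c x y)

lemma lieBracketQuot_apply (I : LieIdeal K F) (x y : F) :
    lieBracketQuot K I x y =
      Submodule.Quotient.mk ⟨⁅x, y⁆, lie_mem_lowerCentralSeries_one x y⟩ := rfl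

lemma lieBracketQuot_self (I : LieIdeal K F) (x : F) : lieBracketQuot K I x x = 0 := by
  rw [lieBracketQuot_apply, Submodule.Quotient.mk_eq_zero]
  simp

lemma span_range_lieBracketQuot (I : LieIdeal K F) :
    Submodule.span K (Set.range fun p : F × F => lieBracketQuot K I p.1 p.2) = ⊤ := by
  set A := (lowerCentralSeries K F F 1).toSubmodule
  have hA : Submodule.span K (Set.range fun p : F × F =>
      (⟨⁅p.1, p.2⁆, lie_mem_lowerCentralSeries_one p.1 p.2⟩ : A)) = ⊤ := by
    apply Submodule.map_injective_of_injective A.injective_subtype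
    rw [Submodule.map_span, Submodule.map_subtype_top, ← Set.range_comp]
    exact lowerCentralSeries_one_eq_span.symm
  rw [← Submodule.range_mkQ, ← Submodule.map_top, ← hA, Submodule.map_span, ← Set.range_comp]
  rfl

lemma lieBracketQuot_eq_of_sub_mem (R : LieIdeal K F) {x x' y y' : F} (hx : x - x' ∈ R)
    (hy : y - y' ∈ R) :
    lieBracketQuot K ⁅(⊤ : LieIdeal K F), R⁆ x y =
      lieBracketQuot K ⁅(⊤ : LieIdeal K F), R⁆ x' y' := by
  rw [lieBracketQuot_apply, lieBracketQuot_apply, Submodule.Quotient.eq]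
  exact lie_sub_lie_mem_lie_top R hx hy

variable {L : Type*} [LieRing L] [LieAlgebra K L]

theorem finite_and_finrank_lieIdealQuot_le_choose_two [FiniteDimensional K L]
    (π : F →ₗ⁅K⁆ L) (hπ : Function.Surjective π) :
    Module.Finite K (lieIdealQuot K (lowerCentralSeries K F F 1) ⁅(⊤ : LieIdeal K F), π.ker⁆) ∧
      finrank K (lieIdealQuot K (lowerCentralSeries K F F 1) ⁅(⊤ : LieIdeal K F), π.ker⁆) ≤
        (finrank K L).choose 2 := by
  obtain ⟨s, hs⟩ := π.toLinearMap.exists_rightInverse_of_surjective (LinearMap.range_eq_top.2 hπ)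
  have hsub : ∀ x, x - s (π x) ∈ π.ker := fun x => by
    rw [LieHom.mem_ker, map_sub, ← LieHom.coe_toLinearMap π, ← LinearMap.comp_apply, hs,
      LinearMap.id_apply, sub_self]
  refine finite_and_finrank_le_choose_two_of_span_eq_top ((lieBracketQuot K _).compl₁₂ s s)
    (fun u => lieBracketQuot_self _ (s u)) ?_
  rw [eq_top_iff, ← span_range_lieBracketQuot]
  apply Submodule.span_mono
  rintro _ ⟨⟨x, y⟩, rfl⟩
  exact ⟨(π x, π y), (lieBracketQuot_eq_of_sub_mem _ (hsub x) (hsub y)).symm⟩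

theorem finrank_schurMult_add_finrank_lowerCentralSeries_one (π : F →ₗ⁅K⁆ L)
    (hπ : Function.Surjective π)
    [FiniteDimensional K
      (lieIdealQuot K (lowerCentralSeries K F F 1) ⁅(⊤ : LieIdeal K F), π.ker⁆)] :
    finrank K (schurMult K π.ker) + finrank K (lowerCentralSeries K L L 1).toSubmodule =
      finrank K (lieIdealQuot K (lowerCentralSeries K F F 1) ⁅(⊤ : LieIdeal K F), π.ker⁆) := by
  have hB : (⁅(⊤ : LieIdeal K F), π.ker⁆ : LieIdeal K F).toSubmodule ≤
      LinearMap.ker π.toLinearMap :=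
    LieSubmodule.lie_le_right π.ker ⊤
  have hC : (lowerCentralSeries K F F 1 ⊓ π.ker).toSubmodule =
      (lowerCentralSeries K F F 1).toSubmodule ⊓ LinearMap.ker π.toLinearMap := by
    rw [LieSubmodule.inf_toSubmodule]
    rfl
  have hL : (lowerCentralSeries K L L 1).toSubmodule =
      (lowerCentralSeries K F F 1).toSubmodule.map π.toLinearMap := by
    rw [← LieIdeal.coe_map_of_surjective hπ, LieIdeal.lowerCentralSeries_map_eq 1 hπ]
  have := Submodule.finrank_quotient_inf_ker_add_finrank_map π.toLinearMap
    (lowerCentralSeries K F F 1).toSubmodule _ hB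
  rwa [← hC, ← hL] at this

end LieBracketQuot

theorem stmt6 (K : Type) [Field K] (L : Type) [LieRing L] [LieAlgebra K L]
    [FiniteDimensional K L] (n : ℕ) (hn : Module.finrank K L = n)
    (X : Type) (π : FreeLieAlgebra K X →ₗ⁅K⁆ L) (hπ : Function.Surjective π) :
    (Module.finrank K (schurMult K π.ker) : ℚ) ≤
      (n : ℚ) * ((n : ℚ) - 1) / 2 -
        (Module.finrank K (lowerCentralSeries K L L 1).toSubmodule : ℚ) := by
  obtain ⟨hfin, hle⟩ := finite_and_finrank_lieIdealQuot_le_choose_two π hπ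
  rw [hn] at hle
  rw [le_sub_iff_add_le, ← Nat.cast_add, finrank_schurMult_add_finrank_lowerCentralSeries_one π hπ,
    ← Nat.cast_choose_two]
  exact_mod_cast hle
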